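/- arXiv:2409.18285 — 6 statements merged into one kernel-verified Lean document; each statement's English description precedes it below -/
import Mathlib

section
/- Let X ⊆ ℝ^p be a nonempty closed convex set, r > 0, and let x : [0,∞) → ℝ^p be continuous on [0,∞) and differentiable on (0,∞), with x(0) ∈ X and x′(t) = (r/t)(p(t) − x(t)) for all t > 0, where p : (0,∞) → ℝ^p satisfies p(t) ∈ X for every t > 0. Then x(t) ∈ X for all t ≥ 0. -/
open Set Filter Metric Topology

lemma infDist_convex_step {E : Type*} [NormedAddCommGroup E] [NormedSpace ℝ E]
    [ProperSpace E] {X : Set E} (hne : X.Nonempty) (hcl : IsClosed X) (hconv : Convex ℝ X)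
    {a b : E} (hb : b ∈ X) {l : ℝ} (hl0 : 0 ≤ l) (hl1 : l ≤ 1) :
    Metric.infDist (a + l • (b - a)) X ≤ (1 - l) * Metric.infDist a X := by
  obtain ⟨y, hy, hdy⟩ := hcl.exists_infDist_eq_dist hne a
  have hw : (1 - l) • y + l • b ∈ X := hconv hy hb (by linarith) hl0 (by ring)
  calc Metric.infDist (a + l • (b - a)) X ≤ dist (a + l • (b - a)) ((1 - l) • y + l • b) :=
        Metric.infDist_le_dist_of_mem hw
    _ = ‖(1 - l) • (a - y)‖ := by
        rw [dist_eq_norm]; congr 1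
        simp only [smul_sub, sub_smul, one_smul]; abel
    _ = (1 - l) * dist a y := by
        rw [norm_smul, Real.norm_eq_abs, abs_of_nonneg (by linarith), dist_eq_norm]
    _ = (1 - l) * Metric.infDist a X := by rw [hdy]

/-- Viability of the mirror-descent averaging ODE: if `X` is a nonempty
closed convex set, `r > 0`, `x` is continuous on `[0,∞)`, differentiable on `(0,∞)` with
`x′(t) = (r/t)(p t − x t)` where `p t ∈ X` for all `t > 0`, and `x 0 ∈ X`,
then `x t ∈ X` for all `t ≥ 0`. -/
theorem stmt_2 (n : ℕ) (X : Set (EuclideanSpace ℝ (Fin n)))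
    (hne : X.Nonempty) (hcl : IsClosed X) (hconv : Convex ℝ X)
    (r : ℝ) (hr : 0 < r)
    (x : ℝ → EuclideanSpace ℝ (Fin n))
    (p : ℝ → EuclideanSpace ℝ (Fin n))
    (hcont : ContinuousOn x (Ici 0))
    (hode : ∀ t > 0, HasDerivAt x ((r / t) • (p t - x t)) t)
    (hp : ∀ t > 0, p t ∈ X)
    (hx0 : x 0 ∈ X) :
    ∀ t ≥ 0, x t ∈ X := by
  set f : ℝ → ℝ := fun t => Metric.infDist (x t) X with hf
  have hfc : ContinuousOn f (Ici 0) :=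
    (Metric.continuous_infDist_pt X).comp_continuousOn hcont
  have key : ∀ T > 0, ∀ ε > 0, f T ≤ ε := by
    intro T hT ε hε
    have h0 : f 0 = 0 := Metric.infDist_zero_of_mem hx0
    have hev : ∀ᶠ t in 𝓝[Set.Ici 0] 0, f t < ε := by
      have := hfc 0 (le_refl (0:ℝ))
      rw [ContinuousWithinAt, h0] at this
      exact this (Iio_mem_nhds hε)
    have hev' : ∀ᶠ t in 𝓝[>] 0, f t < ε := hev.filter_mono (nhdsWithin_mono _ Ioi_subset_Ici_self)
    obtain ⟨a, hfa, ha⟩ := (hev'.and (Ioc_mem_nhdsGT_of_mem ⟨le_refl (0:ℝ), hT⟩)).exists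
    have ha0 : 0 < a := ha.1
    -- apply fencing theorem on [a, T]
    have main := image_le_of_liminf_slope_right_lt_deriv_boundary'
      (f := f) (f' := fun t => -(r / t) * f t) (a := a) (b := T)
      (hfc.mono (fun z hz => le_trans ha0.le hz.1))
      ?_ (B := fun _ => ε) (B' := fun _ => 0) hfa.le continuousOn_const
      (fun t _ => hasDerivWithinAt_const t _ ε) ?_
    · exact main ⟨ha.2, le_refl T⟩
    · intro t ht s hs
      have ht0 : 0 < t := lt_of_lt_of_le ha0 ht.1
      set v := (r / t) • (p t - x t) with hv
      have hlo := (hasDerivAt_iff_isLittleO.1 (hode t ht0))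
      set c := (s - (-(r / t) * f t)) / 2 with hc
      have hc0 : 0 < c := by simp only [hc]; linarith
      have hev1 : ∀ᶠ z in 𝓝 t, ‖x z - x t - (z - t) • v‖ ≤ c * ‖z - t‖ :=
        hlo.def hc0
      have hev2 : ∀ᶠ z in 𝓝[>] t, z ∈ Set.Ioo t (t + t / r) :=
        Ioo_mem_nhdsGT_of_mem ⟨le_refl t, by have := div_pos ht0 hr; linarith⟩
      have : ∀ᶠ z in 𝓝[>] t, slope f t z < s := by
        filter_upwards [hev1.filter_mono nhdsWithin_le_nhds, hev2] with z h1 h2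
        have hzt : 0 < z - t := sub_pos.2 h2.1
        set l := (z - t) * (r / t) with hl
        have hl0 : 0 ≤ l := by positivity
        have hl1 : l ≤ 1 := by
          have hzr : z - t < t / r := by linarith [h2.2]
          have : (z - t) * (r / t) ≤ (t / r) * (r / t) :=
            mul_le_mul_of_nonneg_right hzr.le (by positivity)
          rw [hl]
          calc (z - t) * (r / t) ≤ (t / r) * (r / t) := this
            _ = 1 := by field_simp
        have hsmul : (z - t) • v = l • (p t - x t) := by
          rw [hv, smul_smul, hl]
        have hstep : f z ≤ ‖x z - x t - (z - t) • v‖ + (1 - l) * f t := by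
          calc f z ≤ dist (x z) (x t + l • (p t - x t)) +
                Metric.infDist (x t + l • (p t - x t)) X :=
                le_trans (Metric.infDist_le_infDist_add_dist) (by rw [add_comm])
            _ ≤ ‖x z - x t - (z - t) • v‖ + (1 - l) * f t := by
                gcongr
                · have e : x z - (x t + l • (p t - x t)) = x z - x t - (z - t) • v := by
                    rw [hsmul]; abel
                  rw [dist_eq_norm, e]
                · exact infDist_convex_step hne hcl hconv (hp t ht0) hl0 hl1
        rw [slope_def_field, div_lt_iff₀ hzt]
        have hft : 0 ≤ f t := Metric.infDist_nonneg
        have h1' : ‖x z - x t - (z - t) • v‖ ≤ c * (z - t) := by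
          rwa [Real.norm_eq_abs, abs_of_pos hzt] at h1
        have hlf : l * f t = (z - t) * ((r / t) * f t) := by rw [hl]; ring
        nlinarith [hs, hc0]
      exact this.frequently
    · intro t ht hft
      have ht0 : 0 < t := lt_of_lt_of_le ha0 ht.1
      rw [hft]
      have : 0 < r / t := by positivity
      nlinarith
  intro t ht
  rcases eq_or_lt_of_le ht with h | h
  · rwa [← h]
  · have h0 : f t ≤ 0 := le_of_forall_pos_le_add (by
      intro ε hε; simpa using key t h ε hε)
    have : f t = 0 := le_antisymm h0 Metric.infDist_nonneg
    exact ((IsClosed.mem_iff_infDist_zero hcl hne).2 this)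
end

section
/- Assume X ⊆ ℝ^p and Y ⊆ ℝ^q are nonempty, closed and convex; F and G are continuously differentiable and strictly convex on open sets containing X and Y; H ∈ ℝ^{p×q}; and ψ, φ are continuously differentiable strongly convex generating functions for X and Y with mirror maps Pψ, Pφ. Then (x*, y*) ∈ X × Y is a saddle point of L over X × Y if and only if there exist u* ∈ ℝ^p and v* ∈ ℝ^q such that: x* = Pψ(u*), y* = Pφ(v*), u* = ∇ψ(x*) − ∇F(x*) − H y*, and v* = ∇φ(y*) − ∇G(y*) + Hᵀ x* (i.e., (x*, u*, y*, v*) is an equilibrium point of the accelerated dynamics). -/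
/-!
Both sides of the equivalence reduce to the same pair of variational inequalities. For a
function that is convex and differentiable on a convex set, being minimised at `x` is equivalent to
`0 ≤ ⟪∇f x, z - x⟫` for all `z` in the set. Hence `x*` minimises `L(·, y*)` over `X` iff
`0 ≤ ⟪∇F(x*) + H y*, z - x*⟫` on `X`, while `x* = Pψ(u*)` iff `0 ≤ ⟪∇ψ(x*) - u*, z - x*⟫` on `X`;
the choice `u* = ∇ψ(x*) - ∇F(x*) - H y*` makes the two gradients equal. The same argument applied
to `G - ⟪·, Hᵀ x*⟫` and `φ - ⟪·, v*⟫` handles `y*`.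
-/

open scoped RealInnerProductSpace

section FirstOrder

variable {E : Type*} [NormedAddCommGroup E] [InnerProductSpace ℝ E] [CompleteSpace E]
  {s : Set E} {f : E → ℝ} {f' x z : E}

theorem ConvexOn.add_inner_le_of_hasGradientAt (hf : ConvexOn ℝ s f) (hx : x ∈ s) (hz : z ∈ s)
    (hgrad : HasGradientAt f f' x) : f x + ⟪f', z - x⟫ ≤ f z := by
  let ℓ : ℝ →ᵃ[ℝ] E := AffineMap.lineMap x z
  have hderiv : HasDerivAt (f ∘ ℓ) ⟪f', z - x⟫ 0 := by
    have hf' : HasFDerivAt f (InnerProductSpace.toDual ℝ E f') (ℓ 0) := by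
      simpa [ℓ] using hgrad.hasFDerivAt
    exact hf'.comp_hasDerivAt 0 AffineMap.hasDerivAt_lineMap
  have hslope := (hf.comp_affineMap ℓ).le_slope_of_hasDerivAt (x := 0) (y := 1)
    (by simpa [ℓ] using hx) (by simpa [ℓ] using hz) one_pos hderiv
  simp only [slope_def_field, Function.comp_apply, ℓ, AffineMap.lineMap_apply_zero,
    AffineMap.lineMap_apply_one, sub_zero, div_one] at hslope
  linarith

theorem IsMinOn.inner_gradient_nonneg (hs : Convex ℝ s) (hmin : IsMinOn f s x) (hx : x ∈ s)
    (hz : z ∈ s) (hgrad : HasGradientAt f f' x) : 0 ≤ ⟪f', z - x⟫ :=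
  hmin.localize.hasFDerivWithinAt_nonneg hgrad.hasFDerivAt.hasFDerivWithinAt
    (sub_mem_posTangentConeAt_of_segment_subset (hs.segment_subset hx hz))

theorem ConvexOn.isMinOn_iff_inner_gradient_nonneg (hf : ConvexOn ℝ s f) (hx : x ∈ s)
    (hgrad : HasGradientAt f f' x) : IsMinOn f s x ↔ ∀ z ∈ s, 0 ≤ ⟪f', z - x⟫ :=
  ⟨fun hmin _ hz => hmin.inner_gradient_nonneg hf.1 hx hz hgrad, fun hvi => isMinOn_iff.2
    fun z hz => by linarith [hf.add_inner_le_of_hasGradientAt hx hz hgrad, hvi z hz]⟩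

theorem HasGradientAt.add_inner_const (hf : HasGradientAt f f' x) (c : E) :
    HasGradientAt (fun z => f z + ⟪z, c⟫) (f' + c) x := by
  have hc : HasFDerivAt (fun z => ⟪z, c⟫) (InnerProductSpace.toDual ℝ E c) x := by
    convert (InnerProductSpace.toDual ℝ E c).hasFDerivAt using 1
    funext z
    exact real_inner_comm c z
  rw [hasGradientAt_iff_hasFDerivAt, map_add]
  exact hf.hasFDerivAt.add hc

omit [CompleteSpace E] in
theorem ConvexOn.add_inner_const (hf : ConvexOn ℝ s f) (c : E) :
    ConvexOn ℝ s (fun z => f z + ⟪z, c⟫) :=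
  hf.add (((innerₛₗ ℝ).flip c).convexOn hf.1)

theorem ConvexOn.isMinOn_add_inner_iff (hf : ConvexOn ℝ s f) (hx : x ∈ s)
    (hgrad : HasGradientAt f f' x) (c : E) :
    IsMinOn (fun z => f z + ⟪z, c⟫) s x ↔ ∀ z ∈ s, 0 ≤ ⟪f' + c, z - x⟫ :=
  (hf.add_inner_const c).isMinOn_iff_inner_gradient_nonneg hx (hgrad.add_inner_const c)

theorem ConvexOn.isMinOn_sub_inner_iff (hf : ConvexOn ℝ s f) (hx : x ∈ s)
    (hgrad : HasGradientAt f f' x) (c : E) :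
    IsMinOn (fun z => f z - ⟪z, c⟫) s x ↔ ∀ z ∈ s, 0 ≤ ⟪f' - c, z - x⟫ := by
  simpa only [inner_neg_right, ← sub_eq_add_neg] using hf.isMinOn_add_inner_iff hx hgrad (-c)

end FirstOrder

theorem eq_iff_isMinOn_of_unique {α β : Type*} [PartialOrder β] {g : α → β} {s : Set α} {m x : α}
    (hm : m ∈ s) (hmin : IsMinOn g s m) (huniq : ∀ z ∈ s, g z = g m → z = m) (hx : x ∈ s) :
    x = m ↔ IsMinOn g s x := by
  refine ⟨fun h => h ▸ hmin, fun hxmin => huniq x hx ?_⟩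
  exact le_antisymm (isMinOn_iff.1 hxmin m hm) (isMinOn_iff.1 hmin x hx)

theorem forall_saddle_iff_isMinOn_and_isMaxOn {α β γ : Type*} [Preorder γ] {L : α → β → γ}
    {X : Set α} {Y : Set β} {x : α} {y : β} (hx : x ∈ X) (hy : y ∈ Y) :
    (∀ x' ∈ X, ∀ y' ∈ Y, L x y' ≤ L x y ∧ L x y ≤ L x' y) ↔
      IsMinOn (L · y) X x ∧ IsMaxOn (L x) Y y :=
  ⟨fun h => ⟨fun x' hx' => (h x' hx' y hy).2, fun y' hy' => (h x hx y' hy').1⟩,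
    fun h _ hx' _ hy' => ⟨h.2 hy', h.1 hx'⟩⟩

theorem Matrix.inner_toEuclideanLin_transpose {m n : Type*} [Fintype m] [DecidableEq m]
    [Fintype n] [DecidableEq n] (H : Matrix m n ℝ) (x : EuclideanSpace ℝ m)
    (y : EuclideanSpace ℝ n) :
    ⟪Matrix.toEuclideanLin H.transpose x, y⟫ = ⟪x, Matrix.toEuclideanLin H y⟫ := by
  rw [← Matrix.conjTranspose_eq_transpose_of_trivial, Matrix.toEuclideanLin_conjTranspose_eq_adjoint]
  exact LinearMap.adjoint_inner_left _ _ _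

theorem stmt_6_general (p q : ℕ)
    (X : Set (EuclideanSpace ℝ (Fin p))) (Y : Set (EuclideanSpace ℝ (Fin q)))
    (hXcv : Convex ℝ X)
    (hYcv : Convex ℝ Y)
    (U : Set (EuclideanSpace ℝ (Fin p))) (V : Set (EuclideanSpace ℝ (Fin q)))
    (hXU : X ⊆ U) (hYV : Y ⊆ V)
    (F : EuclideanSpace ℝ (Fin p) → ℝ) (G : EuclideanSpace ℝ (Fin q) → ℝ)
    (F' : EuclideanSpace ℝ (Fin p) → EuclideanSpace ℝ (Fin p))
    (G' : EuclideanSpace ℝ (Fin q) → EuclideanSpace ℝ (Fin q))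
    (hF : ∀ x ∈ U, HasGradientAt F (F' x) x)
    (hG : ∀ y ∈ V, HasGradientAt G (G' y) y)
    (hFcv : StrictConvexOn ℝ U F) (hGcv : StrictConvexOn ℝ V G)
    (H : Matrix (Fin p) (Fin q) ℝ)
    (L : EuclideanSpace ℝ (Fin p) → EuclideanSpace ℝ (Fin q) → ℝ)
    (hL : ∀ x y, L x y = F x + ⟪x, Matrix.toEuclideanLin H y⟫ - G y)
    (ψ : EuclideanSpace ℝ (Fin p) → ℝ) (φ : EuclideanSpace ℝ (Fin q) → ℝ)
    (ψ' : EuclideanSpace ℝ (Fin p) → EuclideanSpace ℝ (Fin p))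
    (φ' : EuclideanSpace ℝ (Fin q) → EuclideanSpace ℝ (Fin q))
    (hψ : ∀ x, HasGradientAt ψ (ψ' x) x)
    (hφ : ∀ y, HasGradientAt φ (φ' y) y)
    (μψ : ℝ) (hμψ : 0 < μψ) (hψsc : StrongConvexOn X μψ ψ)
    (μφ : ℝ) (hμφ : 0 < μφ) (hφsc : StrongConvexOn Y μφ φ)
    -- mirror maps: Pψ u is the unique minimizer of ψ(·) − ⟪·, u⟫ over X, likewise Pφ
    (Pψ : EuclideanSpace ℝ (Fin p) → EuclideanSpace ℝ (Fin p))
    (Pφ : EuclideanSpace ℝ (Fin q) → EuclideanSpace ℝ (Fin q))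
    (hPψ : ∀ u, Pψ u ∈ X ∧ (∀ z ∈ X, ψ (Pψ u) - ⟪Pψ u, u⟫ ≤ ψ z - ⟪z, u⟫) ∧
      (∀ z ∈ X, ψ z - ⟪z, u⟫ = ψ (Pψ u) - ⟪Pψ u, u⟫ → z = Pψ u))
    (hPφ : ∀ v, Pφ v ∈ Y ∧ (∀ z ∈ Y, φ (Pφ v) - ⟪Pφ v, v⟫ ≤ φ z - ⟪z, v⟫) ∧
      (∀ z ∈ Y, φ z - ⟪z, v⟫ = φ (Pφ v) - ⟪Pφ v, v⟫ → z = Pφ v))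
    (xstar : EuclideanSpace ℝ (Fin p)) (ystar : EuclideanSpace ℝ (Fin q))
    (hxstar : xstar ∈ X) (hystar : ystar ∈ Y) :
    (∀ x' ∈ X, ∀ y' ∈ Y, L xstar y' ≤ L xstar ystar ∧ L xstar ystar ≤ L x' ystar) ↔
    (∃ ustar vstar, xstar = Pψ ustar ∧ ystar = Pφ vstar ∧
      ustar = ψ' xstar - F' xstar - Matrix.toEuclideanLin H ystar ∧
      vstar = φ' ystar - G' ystar + Matrix.toEuclideanLin H.transpose xstar) := by
  set A := Matrix.toEuclideanLin H
  set B := Matrix.toEuclideanLin H.transpose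
  set u := ψ' xstar - F' xstar - A ystar
  set v := φ' ystar - G' ystar + B xstar
  have hLx : IsMinOn (L · ystar) X xstar ↔ ∀ z ∈ X, 0 ≤ ⟪F' xstar + A ystar, z - xstar⟫ := by
    rw [← ((hFcv.convexOn.subset hXU hXcv).isMinOn_add_inner_iff hxstar (hF _ (hXU hxstar)))]
    simp only [isMinOn_iff, hL]
    exact forall₂_congr fun _ _ => by constructor <;> intro h <;> linarith
  have hLy : IsMaxOn (L xstar) Y ystar ↔ ∀ z ∈ Y, 0 ≤ ⟪G' ystar - B xstar, z - ystar⟫ := by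
    rw [← ((hGcv.convexOn.subset hYV hYcv).isMinOn_sub_inner_iff hystar (hG _ (hYV hystar)))]
    have hAB : ∀ y, ⟪xstar, A y⟫ = ⟪y, B xstar⟫ := fun y =>
      (H.inner_toEuclideanLin_transpose xstar y).symm.trans (real_inner_comm _ _)
    simp only [isMinOn_iff, isMaxOn_iff, hL, hAB]
    exact forall₂_congr fun _ _ => by constructor <;> intro h <;> linarith
  have hPx : xstar = Pψ u ↔ ∀ z ∈ X, 0 ≤ ⟪F' xstar + A ystar, z - xstar⟫ := by
    obtain ⟨hmem, hmin, huniq⟩ := hPψ u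
    rw [eq_iff_isMinOn_of_unique hmem (isMinOn_iff.2 hmin) huniq hxstar,
      (hψsc.convexOn fun r => by positivity).isMinOn_sub_inner_iff hxstar (hψ xstar),
      show ψ' xstar - u = F' xstar + A ystar by simp only [u]; abel]
  have hPy : ystar = Pφ v ↔ ∀ z ∈ Y, 0 ≤ ⟪G' ystar - B xstar, z - ystar⟫ := by
    obtain ⟨hmem, hmin, huniq⟩ := hPφ v
    rw [eq_iff_isMinOn_of_unique hmem (isMinOn_iff.2 hmin) huniq hystar,
      (hφsc.convexOn fun r => by positivity).isMinOn_sub_inner_iff hystar (hφ ystar),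
      show φ' ystar - v = G' ystar - B xstar by simp only [v]; abel]
  rw [forall_saddle_iff_isMinOn_and_isMaxOn hxstar hystar, hLx, hLy, ← hPx, ← hPy]
  exact ⟨fun h => ⟨u, v, h.1, h.2, rfl, rfl⟩, fun ⟨_, _, hx, hy, hu, hv⟩ => ⟨hu ▸ hx, hv ▸ hy⟩⟩

/-- Lemma 3 of the paper. `(x*, y*) ∈ X × Y` is a saddle point of the
bilinear saddle function `L` over `X × Y` if and only if there exist `u*, v*` such that
`x* = Pψ(u*)`, `y* = Pφ(v*)`, `u* = ∇ψ(x*) − ∇F(x*) − H y*` and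
`v* = ∇φ(y*) − ∇G(y*) + Hᵀ x*`, i.e. `(x*, u*, y*, v*)` is an equilibrium point of the
accelerated dynamics. -/
theorem stmt_6 (p q : ℕ)
    (X : Set (EuclideanSpace ℝ (Fin p))) (Y : Set (EuclideanSpace ℝ (Fin q)))
    (hXne : X.Nonempty) (hXcl : IsClosed X) (hXcv : Convex ℝ X)
    (hYne : Y.Nonempty) (hYcl : IsClosed Y) (hYcv : Convex ℝ Y)
    (U : Set (EuclideanSpace ℝ (Fin p))) (V : Set (EuclideanSpace ℝ (Fin q)))
    (hUopen : IsOpen U) (hXU : X ⊆ U) (hVopen : IsOpen V) (hYV : Y ⊆ V)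
    (F : EuclideanSpace ℝ (Fin p) → ℝ) (G : EuclideanSpace ℝ (Fin q) → ℝ)
    (F' : EuclideanSpace ℝ (Fin p) → EuclideanSpace ℝ (Fin p))
    (G' : EuclideanSpace ℝ (Fin q) → EuclideanSpace ℝ (Fin q))
    (hF : ∀ x ∈ U, HasGradientAt F (F' x) x) (hF'c : ContinuousOn F' U)
    (hG : ∀ y ∈ V, HasGradientAt G (G' y) y) (hG'c : ContinuousOn G' V)
    (hFcv : StrictConvexOn ℝ U F) (hGcv : StrictConvexOn ℝ V G)
    (H : Matrix (Fin p) (Fin q) ℝ)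
    (L : EuclideanSpace ℝ (Fin p) → EuclideanSpace ℝ (Fin q) → ℝ)
    (hL : ∀ x y, L x y = F x + ⟪x, Matrix.toEuclideanLin H y⟫ - G y)
    (ψ : EuclideanSpace ℝ (Fin p) → ℝ) (φ : EuclideanSpace ℝ (Fin q) → ℝ)
    (ψ' : EuclideanSpace ℝ (Fin p) → EuclideanSpace ℝ (Fin p))
    (φ' : EuclideanSpace ℝ (Fin q) → EuclideanSpace ℝ (Fin q))
    (hψ : ∀ x, HasGradientAt ψ (ψ' x) x) (hψ'c : Continuous ψ')
    (hφ : ∀ y, HasGradientAt φ (φ' y) y) (hφ'c : Continuous φ')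
    (μψ : ℝ) (hμψ : 0 < μψ) (hψsc : StrongConvexOn X μψ ψ)
    (μφ : ℝ) (hμφ : 0 < μφ) (hφsc : StrongConvexOn Y μφ φ)
    -- mirror maps: Pψ u is the unique minimizer of ψ(·) − ⟪·, u⟫ over X, likewise Pφ
    (Pψ : EuclideanSpace ℝ (Fin p) → EuclideanSpace ℝ (Fin p))
    (Pφ : EuclideanSpace ℝ (Fin q) → EuclideanSpace ℝ (Fin q))
    (hPψ : ∀ u, Pψ u ∈ X ∧ (∀ z ∈ X, ψ (Pψ u) - ⟪Pψ u, u⟫ ≤ ψ z - ⟪z, u⟫) ∧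
      (∀ z ∈ X, ψ z - ⟪z, u⟫ = ψ (Pψ u) - ⟪Pψ u, u⟫ → z = Pψ u))
    (hPφ : ∀ v, Pφ v ∈ Y ∧ (∀ z ∈ Y, φ (Pφ v) - ⟪Pφ v, v⟫ ≤ φ z - ⟪z, v⟫) ∧
      (∀ z ∈ Y, φ z - ⟪z, v⟫ = φ (Pφ v) - ⟪Pφ v, v⟫ → z = Pφ v))
    (xstar : EuclideanSpace ℝ (Fin p)) (ystar : EuclideanSpace ℝ (Fin q))
    (hxstar : xstar ∈ X) (hystar : ystar ∈ Y) :
    (∀ x' ∈ X, ∀ y' ∈ Y, L xstar y' ≤ L xstar ystar ∧ L xstar ystar ≤ L x' ystar) ↔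
    (∃ ustar vstar, xstar = Pψ ustar ∧ ystar = Pφ vstar ∧
      ustar = ψ' xstar - F' xstar - Matrix.toEuclideanLin H ystar ∧
      vstar = φ' ystar - G' ystar + Matrix.toEuclideanLin H.transpose xstar) :=
  stmt_6_general p q X Y hXcv hYcv U V hXU hYV F G F' G' hF hG hFcv hGcv H L hL ψ φ ψ' φ' hψ hφ μψ
    hμψ hψsc μφ hμφ hφsc Pψ Pφ hPψ hPφ xstar ystar hxstar hystar
end

section
/- Let n ∈ ℕ, r > 0, and let Π*, Π, R′ : ℝ^n → ℝ^n be globally Lipschitz continuous maps and H̃ ∈ ℝ^{n×n} a matrix. Let z₀, w₀ ∈ ℝ^n satisfy z₀ = Π*(w₀) and w₀ = Π(z₀). Then there exists a unique pair (z, w) of functions from [0,∞) to ℝ^n that are continuous on [0,∞), differentiable on (0,∞), satisfy z(0) = z₀, w(0) = w₀, and for all t > 0: z′(t) = (r/t)(Π*(w(t)) − z(t)) and w′(t) = (t/r)(−R′(z(t)) − H̃(z(t) + (t/r)z′(t)) + Π(z(t) + (t/r)z′(t)) − w(t)). Uniqueness means that any two such pairs coincide on [0,∞). -/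
open Set

/-- A solution of the singular accelerated primal-dual ODE
`z′(t) = (r/t)(Π*(w(t)) − z(t))`,
`w′(t) = (t/r)(−R′(z(t)) − H̃(z(t) + (t/r)z′(t)) + Π(z(t) + (t/r)z′(t)) − w(t))`
on `[0,∞)` with initial data `(z₀, w₀)`; `zd` and `wd` record the derivatives. -/
def IsSingularPDSolution (n : ℕ) (r : ℝ)
    (Pistar Pimap Rg : EuclideanSpace ℝ (Fin n) → EuclideanSpace ℝ (Fin n))
    (Ht : Matrix (Fin n) (Fin n) ℝ)
    (z₀ w₀ : EuclideanSpace ℝ (Fin n))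
    (z w zd wd : ℝ → EuclideanSpace ℝ (Fin n)) : Prop :=
  ContinuousOn z (Ici 0) ∧ ContinuousOn w (Ici 0) ∧
  z 0 = z₀ ∧ w 0 = w₀ ∧
  ∀ t > 0, HasDerivAt z (zd t) t ∧ HasDerivAt w (wd t) t ∧
    zd t = (r / t) • (Pistar (w t) - z t) ∧
    wd t = (t / r) • (-(Rg (z t)) - Matrix.toEuclideanLin Ht (z t + (t / r) • zd t)
      + Pimap (z t + (t / r) • zd t) - w t)

/-!
The `z`-equation says `(t ^ r • z)' = r t ^ (r - 1) • Π*(w)`, so together with `z 0 = Π*(w₀)` it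
is equivalent to `z = weightedAvg r (Π* ∘ w)`, an average of `Π* ∘ w` over `[0, t]`. It also gives
`z + (t / r) z' = Π*(w)`, which removes the singularity from the `w`-equation: `w` has to solve the
Volterra integral equation `w t = w₀ + ∫₀ᵗ (s / r) • G (z s, w s) ds` with `G` Lipschitz.

Averaging does not increase sup norms, so on `[0, T]` the integral operator `Φ` satisfies
`‖Φ g₁ t - Φ g₂ t‖ ≤ K c t ^ (m + 1) / (m + 1)` whenever `‖g₁ u - g₂ u‖ ≤ c u ^ m`. Iterating,
`Φ^[k]` is `(K T) ^ k / k!`-Lipschitz on `C([0, T])`, hence a contraction for large `k`. This gives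
a unique solution on every `[0, T]`, and by uniqueness these glue to one on `[0, ∞)`.
-/

open Filter Topology MeasureTheory
open scoped Nat NNReal

variable {E : Type*} [NormedAddCommGroup E]

lemma continuousOn_Ici_of_forall_Icc {X : Type*} [TopologicalSpace X] {f : ℝ → X} {a : ℝ}
    (h : ∀ T, a ≤ T → ContinuousOn f (Icc a T)) : ContinuousOn f (Ici a) := fun t ht =>
  ((h (t + 1) (by linarith [mem_Ici.1 ht])) t ⟨ht, by linarith⟩).mono_of_mem_nhdsWithin <| by
    rw [← Ici_inter_Iic]; exact inter_mem_nhdsWithin _ (Iic_mem_nhds (by linarith))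

lemma hasDerivAt_integral_of_continuousOn_Ioi [NormedSpace ℝ E] [CompleteSpace E] {f : ℝ → E}
    {a t : ℝ} (hint : IntervalIntegrable f volume a t) (hf : ContinuousOn f (Ioi a)) (ht : a < t) :
    HasDerivAt (fun u => ∫ s in a..u, f s) (f t) t :=
  intervalIntegral.integral_hasDerivAt_right hint (hf.stronglyMeasurableAtFilter isOpen_Ioi t ht)
    (hf.continuousAt (isOpen_Ioi.mem_nhds ht))

section weightedAvg

variable [NormedSpace ℝ E]

/-- The average of `g` over `[0, t]` with respect to the probability measure `d(s ^ r) / t ^ r`. -/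
noncomputable def weightedAvg (r : ℝ) (g : ℝ → E) (t : ℝ) : E :=
  if 0 < t then (t ^ (-r)) • ∫ s in (0 : ℝ)..t, (r * s ^ (r - 1)) • g s else g 0

variable {r t : ℝ} {g g₁ g₂ : ℝ → E}

lemma intervalIntegrable_rpow_weight (hr : 0 < r) (t : ℝ) :
    IntervalIntegrable (fun s : ℝ => r * s ^ (r - 1)) volume 0 t :=
  (intervalIntegral.intervalIntegrable_rpow' (by linarith)).const_mul r

lemma integral_rpow_weight (hr : 0 < r) (t : ℝ) : ∫ s in (0 : ℝ)..t, r * s ^ (r - 1) = t ^ r := by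
  rw [intervalIntegral.integral_const_mul, integral_rpow (Or.inl (by linarith)), sub_add_cancel,
    Real.zero_rpow hr.ne', sub_zero, mul_div_cancel₀ _ hr.ne']

lemma intervalIntegrable_rpow_weight_smul (hr : 0 < r) (ht : 0 ≤ t)
    (hg : ContinuousOn g (Icc 0 t)) :
    IntervalIntegrable (fun s => (r * s ^ (r - 1)) • g s) volume 0 t :=
  (intervalIntegrable_rpow_weight hr t).smul_continuousOn (by rwa [uIcc_of_le ht])

lemma weightedAvg_of_pos (ht : 0 < t) :
    weightedAvg r g t = (t ^ (-r)) • ∫ s in (0 : ℝ)..t, (r * s ^ (r - 1)) • g s :=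
  if_pos ht

@[simp]
lemma weightedAvg_zero : weightedAvg r g 0 = g 0 := if_neg (lt_irrefl 0)

lemma weightedAvg_congr (ht : 0 ≤ t) (h : EqOn g₁ g₂ (Icc 0 t)) :
    weightedAvg r g₁ t = weightedAvg r g₂ t := by
  rcases ht.eq_or_lt with rfl | ht'
  · simpa using h ⟨le_rfl, le_rfl⟩
  rw [weightedAvg_of_pos ht', weightedAvg_of_pos ht']
  congr 1
  refine intervalIntegral.integral_congr fun s hs => ?_
  rw [uIcc_of_le ht] at hs
  simp only [h hs]

lemma weightedAvg_sub (hr : 0 < r) (ht : 0 ≤ t) (hg₁ : ContinuousOn g₁ (Icc 0 t))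
    (hg₂ : ContinuousOn g₂ (Icc 0 t)) :
    weightedAvg r (g₁ - g₂) t = weightedAvg r g₁ t - weightedAvg r g₂ t := by
  rcases ht.eq_or_lt with rfl | ht'
  · simp
  simp only [weightedAvg_of_pos ht', Pi.sub_apply, smul_sub]
  rw [intervalIntegral.integral_sub (intervalIntegrable_rpow_weight_smul hr ht hg₁)
    (intervalIntegrable_rpow_weight_smul hr ht hg₂), smul_sub]

lemma norm_weightedAvg_le (hr : 0 < r) (ht : 0 ≤ t) (hg : ContinuousOn g (Icc 0 t)) {M : ℝ}
    (hM : ∀ u ∈ Icc 0 t, ‖g u‖ ≤ M) : ‖weightedAvg r g t‖ ≤ M := by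
  rcases ht.eq_or_lt with rfl | ht'
  · simpa using hM 0 ⟨le_rfl, le_rfl⟩
  have hbound : ‖∫ s in (0 : ℝ)..t, (r * s ^ (r - 1)) • g s‖
      ≤ ∫ s in (0 : ℝ)..t, r * s ^ (r - 1) * M := by
    refine intervalIntegral.norm_integral_le_of_norm_le ht (ae_of_all _ fun s hs => ?_)
      ((intervalIntegrable_rpow_weight hr t).mul_const M)
    have : 0 ≤ r * s ^ (r - 1) := by have := hs.1; positivity
    rw [norm_smul, Real.norm_of_nonneg this]
    exact mul_le_mul_of_nonneg_left (hM s (Ioc_subset_Icc_self hs)) this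
  rw [intervalIntegral.integral_mul_const, integral_rpow_weight hr] at hbound
  calc ‖weightedAvg r g t‖ ≤ t ^ (-r) * (t ^ r * M) := by
        rw [weightedAvg_of_pos ht', norm_smul, Real.norm_of_nonneg (by positivity)]
        gcongr
    _ = M := by rw [← mul_assoc, ← Real.rpow_add ht', neg_add_cancel, Real.rpow_zero, one_mul]

lemma norm_weightedAvg_sub_le (hr : 0 < r) (ht : 0 ≤ t) (hg₁ : ContinuousOn g₁ (Icc 0 t))
    (hg₂ : ContinuousOn g₂ (Icc 0 t)) {M : ℝ} (hM : ∀ u ∈ Icc 0 t, ‖g₁ u - g₂ u‖ ≤ M) :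
    ‖weightedAvg r g₁ t - weightedAvg r g₂ t‖ ≤ M := by
  rw [← weightedAvg_sub hr ht hg₁ hg₂]
  exact norm_weightedAvg_le hr ht (hg₁.sub hg₂) hM

variable [CompleteSpace E]

lemma weightedAvg_const (hr : 0 < r) (ht : 0 ≤ t) (a : E) : weightedAvg r (fun _ => a) t = a := by
  rcases ht.eq_or_lt with rfl | ht
  · exact weightedAvg_zero
  rw [weightedAvg_of_pos ht, intervalIntegral.integral_smul_const, integral_rpow_weight hr,
    smul_smul, ← Real.rpow_add ht, neg_add_cancel, Real.rpow_zero, one_smul]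

lemma hasDerivAt_weightedAvg (hr : 0 < r) (hg : ContinuousOn g (Ici 0)) (ht : 0 < t) :
    HasDerivAt (weightedAvg r g) ((r / t) • (g t - weightedAvg r g t)) t := by
  have hkernel : ContinuousOn (fun s => (r * s ^ (r - 1)) • g s) (Ioi 0) :=
    (continuousOn_const.mul (fun s hs => (Real.continuousAt_rpow_const s _
      (Or.inl (ne_of_gt hs))).continuousWithinAt)).smul (hg.mono Ioi_subset_Ici_self)
  have hI := hasDerivAt_integral_of_continuousOn_Ioi
    (intervalIntegrable_rpow_weight_smul hr ht.le (hg.mono Icc_subset_Ici_self)) hkernel ht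
  have hprod := (Real.hasDerivAt_rpow_const (p := -r) (Or.inl ht.ne')).smul hI
  refine (hprod.congr_of_eventuallyEq ?_).congr_deriv ?_
  · filter_upwards [Ioi_mem_nhds ht] with u hu using weightedAvg_of_pos hu
  · have h₁ : t ^ (-r) * (r * t ^ (r - 1)) = r / t := by
      rw [mul_left_comm, ← Real.rpow_add ht, show -r + (r - 1) = -1 by ring, Real.rpow_neg_one,
        div_eq_mul_inv]
    have h₂ : -r * t ^ (-r - 1) = -(r / t * t ^ (-r)) := by
      rw [show -r - 1 = -r + -1 by ring, Real.rpow_add ht, Real.rpow_neg_one]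
      ring
    rw [weightedAvg_of_pos ht, smul_smul, h₁, h₂, neg_smul, mul_smul, ← sub_eq_add_neg, smul_sub]

lemma continuousOn_weightedAvg (hr : 0 < r) (hg : ContinuousOn g (Ici 0)) :
    ContinuousOn (weightedAvg r g) (Ici 0) := by
  intro t ht
  rcases (mem_Ici.1 ht).eq_or_lt with rfl | ht'
  · rw [Metric.continuousWithinAt_iff]
    intro ε hε
    obtain ⟨δ, hδ, hgδ⟩ := Metric.continuousWithinAt_iff.1 (hg 0 ht) (ε / 2) (half_pos hε)
    refine ⟨δ, hδ, fun {u} hu hdu => ?_⟩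
    have hcont : ContinuousOn g (Icc 0 u) := hg.mono Icc_subset_Ici_self
    have hclose : ‖weightedAvg r g u - weightedAvg r (fun _ => g 0) u‖ ≤ ε / 2 := by
      refine norm_weightedAvg_sub_le hr hu hcont continuousOn_const fun v hv => ?_
      rw [← dist_eq_norm]
      refine (hgδ hv.1 ?_).le
      rw [Real.dist_eq, sub_zero, abs_of_nonneg hv.1] at *
      exact hv.2.trans_lt (le_abs_self u |>.trans_lt hdu)
    rw [weightedAvg_const hr hu] at hclose
    rw [weightedAvg_zero, dist_eq_norm]
    linarith
  · exact (hasDerivAt_weightedAvg hr hg ht').continuousAt.continuousWithinAt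

lemma eqOn_weightedAvg_of_hasDerivAt (hr : 0 < r) (hg : ContinuousOn g (Ici 0)) {z : ℝ → E}
    (hz : ContinuousOn z (Ici 0)) (hz₀ : z 0 = g 0)
    (hderiv : ∀ t > 0, HasDerivAt z ((r / t) • (g t - z t)) t) :
    EqOn z (weightedAvg r g) (Ici 0) := by
  intro t ht
  rcases (mem_Ici.1 ht).eq_or_lt with rfl | ht'
  · rwa [weightedAvg_zero]
  -- `s ^ r • z s` is a primitive of the integrand defining `weightedAvg r g`.
  have hFTC := intervalIntegral.integral_eq_sub_of_hasDeriv_right_of_le ht'.le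
    (((Real.continuous_rpow_const hr.le).continuousOn).smul (hz.mono Icc_subset_Ici_self))
    (fun s hs => ?_) (intervalIntegrable_rpow_weight_smul hr ht'.le (hg.mono Icc_subset_Ici_self))
  · simp only [Pi.smul_apply', Real.zero_rpow hr.ne', zero_smul, sub_zero] at hFTC
    rw [weightedAvg_of_pos ht', hFTC, smul_smul, ← Real.rpow_add ht', neg_add_cancel,
      Real.rpow_zero, one_smul]
  · refine (((Real.hasDerivAt_rpow_const (Or.inl hs.1.ne')).smul
      (hderiv s hs.1)).congr_deriv ?_).hasDerivWithinAt
    have : s ^ r * (r / s) = r * s ^ (r - 1) := by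
      rw [Real.rpow_sub hs.1, Real.rpow_one]; field_simp
    rw [smul_smul, this, smul_sub]
    abel

end weightedAvg

section Volterra

variable {T K : ℝ}

/-- The estimate satisfied by `f ↦ ∫₀ᵘ k (s, f) ds` when `k (s, ·)` is `K`-Lipschitz for the sup
norm on `[0, s]`. -/
def VolterraLipschitzWith (K : ℝ) (F : C(Icc (0 : ℝ) T, E) → C(Icc (0 : ℝ) T, E)) : Prop :=
  ∀ f₁ f₂ c (m : ℕ), 0 ≤ c → (∀ u : Icc (0 : ℝ) T, ‖f₁ u - f₂ u‖ ≤ c * (u : ℝ) ^ m) →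
    ∀ u, ‖F f₁ u - F f₂ u‖ ≤ K * c * (u : ℝ) ^ (m + 1) / (m + 1)

def VolterraLipschitzOnWith (K T : ℝ) (Φ : (ℝ → E) → ℝ → E) : Prop :=
  ∀ g₁ g₂, Continuous g₁ → Continuous g₂ → ∀ c (m : ℕ), 0 ≤ c →
    (∀ u ∈ Icc 0 T, ‖g₁ u - g₂ u‖ ≤ c * u ^ m) →
    ∀ t ∈ Icc 0 T, ‖Φ g₁ t - Φ g₂ t‖ ≤ K * c * t ^ (m + 1) / (m + 1)

lemma norm_iterate_sub_le_of_volterra {F : C(Icc (0 : ℝ) T, E) → C(Icc (0 : ℝ) T, E)}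
    (hF : VolterraLipschitzWith K F) (hK : 0 ≤ K) (f₁ f₂ : C(Icc (0 : ℝ) T, E)) (k : ℕ)
    (u : Icc (0 : ℝ) T) :
    ‖F^[k] f₁ u - F^[k] f₂ u‖ ≤ (K * u) ^ k / k ! * dist f₁ f₂ := by
  induction k generalizing u with
  | zero => simpa [dist_eq_norm] using ContinuousMap.dist_apply_le_dist (f := f₁) (g := f₂) u
  | succ k ih =>
    rw [Function.iterate_succ_apply', Function.iterate_succ_apply']
    have hc : 0 ≤ K ^ k / k ! * dist f₁ f₂ := by positivity
    refine (hF _ _ _ k hc (fun v => (ih v).trans_eq (by ring)) u).trans_eq ?_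
    rw [Nat.factorial_succ]
    push_cast
    field_simp
    ring

theorem existsUnique_fixedPoint_of_volterra [CompleteSpace E]
    {F : C(Icc (0 : ℝ) T, E) → C(Icc (0 : ℝ) T, E)} (hF : VolterraLipschitzWith K F)
    (hK : 0 ≤ K) (hT : 0 ≤ T) : ∃! f, F f = f := by
  obtain ⟨k, hk⟩ : ∃ k : ℕ, (K * T) ^ k / k ! < 1 :=
    ((FloorSemiring.tendsto_pow_div_factorial_atTop (K * T)).eventually
      (eventually_lt_nhds one_pos)).exists
  have hq : 0 ≤ (K * T) ^ k / k ! := by positivity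
  have hcontr : ContractingWith ⟨_, hq⟩ F^[k] := by
    refine ⟨hk, LipschitzWith.of_dist_le_mul fun f₁ f₂ => ?_⟩
    refine (ContinuousMap.dist_le (by positivity)).2 fun u => ?_
    rw [dist_eq_norm]
    show ‖_‖ ≤ (K * T) ^ k / k ! * dist f₁ f₂
    refine (norm_iterate_sub_le_of_volterra hF hK f₁ f₂ k u).trans ?_
    have hu := u.2
    gcongr
    · exact mul_nonneg hK hu.1
    · exact hu.2
  refine ⟨_, hcontr.isFixedPt_fixedPoint_iterate, fun f hf => ?_⟩
  exact hcontr.fixedPoint_unique' (Function.IsFixedPt.iterate hf k)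
    (hcontr.isFixedPt_fixedPoint_iterate.iterate k)

lemma exists_fixedOn_Icc_of_causal [CompleteSpace E] {Φ : (ℝ → E) → ℝ → E}
    (hcausal : ∀ g₁ g₂ t, 0 ≤ t → EqOn g₁ g₂ (Icc 0 t) → Φ g₁ t = Φ g₂ t)
    (hcont : ∀ g, Continuous g → ContinuousOn (Φ g) (Ici 0))
    (hlip : ∀ T, 0 ≤ T → ∃ K, 0 ≤ K ∧ VolterraLipschitzOnWith K T Φ)
    (T : ℝ) :
    ∃ g, Continuous g ∧ EqOn (Φ g) g (Icc 0 T) ∧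
      ∀ w, ContinuousOn w (Icc 0 T) → EqOn (Φ w) w (Icc 0 T) → EqOn w g (Icc 0 T) := by
  rcases lt_or_ge T 0 with hT | hT
  · exact ⟨0, continuous_const, by simp [Icc_eq_empty_of_lt hT]⟩
  obtain ⟨K, hK, hΦ⟩ := hlip T hT
  let F : C(Icc (0 : ℝ) T, E) → C(Icc (0 : ℝ) T, E) := fun f =>
    ⟨(Icc 0 T).domRestrict (Φ (IccExtend hT f)),
      ((hcont _ f.continuous.Icc_extend').mono Icc_subset_Ici_self).domRestrict⟩
  have hF : VolterraLipschitzWith K F := by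
    refine fun f₁ f₂ c m hc hb u => hΦ _ _ f₁.continuous.Icc_extend' f₂.continuous.Icc_extend'
      c m hc (fun v hv => ?_) u u.2
    rw [IccExtend_of_mem hT _ hv, IccExtend_of_mem hT _ hv]
    exact hb ⟨v, hv⟩
  have hrestrict : ∀ w (hw : ContinuousOn w (Icc 0 T)), EqOn (Φ w) w (Icc 0 T) →
      F ⟨_, hw.domRestrict⟩ = ⟨_, hw.domRestrict⟩ := by
    intro w hw hfix
    ext u
    refine (hcausal _ w u u.2.1 fun v hv => ?_).trans (hfix u.2)
    exact IccExtend_of_mem hT _ ⟨hv.1, hv.2.trans u.2.2⟩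
  obtain ⟨f, hf, huniq⟩ := existsUnique_fixedPoint_of_volterra hF hK hT
  refine ⟨IccExtend hT f, f.continuous.Icc_extend', fun t ht => ?_, fun w hw hfix t ht => ?_⟩
  · rw [IccExtend_of_mem hT _ ht]
    exact congrArg (· ⟨t, ht⟩) hf
  · rw [IccExtend_of_mem hT _ ht, ← huniq _ (hrestrict w hw hfix)]
    rfl

theorem exists_fixedPoint_of_causal [CompleteSpace E] {Φ : (ℝ → E) → ℝ → E}
    (hcausal : ∀ g₁ g₂ t, 0 ≤ t → EqOn g₁ g₂ (Icc 0 t) → Φ g₁ t = Φ g₂ t)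
    (hcont : ∀ g, Continuous g → ContinuousOn (Φ g) (Ici 0))
    (hlip : ∀ T, 0 ≤ T → ∃ K, 0 ≤ K ∧ VolterraLipschitzOnWith K T Φ) :
    ∃ w, ContinuousOn w (Ici 0) ∧ EqOn (Φ w) w (Ici 0) ∧
      ∀ w', ContinuousOn w' (Ici 0) → EqOn (Φ w') w' (Ici 0) → EqOn w' w (Ici 0) := by
  choose g hgc hgfix hguniq using exists_fixedOn_Icc_of_causal hcausal hcont hlip
  have hglue : ∀ T, EqOn (fun t => g t t) (g T) (Icc 0 T) := fun T t ht =>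
    (hguniq t (g T) (hgc T).continuousOn (fun u hu => hgfix T ⟨hu.1, hu.2.trans ht.2⟩)
      ⟨ht.1, le_rfl⟩).symm
  refine ⟨fun t => g t t,
    continuousOn_Ici_of_forall_Icc fun T _ => (hgc T).continuousOn.congr (hglue T),
    fun t ht => ?_, fun w hw hfix t ht => ?_⟩
  · exact (hcausal _ (g t) t ht (hglue t)).trans (hgfix t ⟨ht, le_rfl⟩)
  · exact hguniq t w (hw.mono Icc_subset_Ici_self) (hfix.mono Icc_subset_Ici_self) ⟨ht, le_rfl⟩

end Volterra

section picardOp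

variable [NormedSpace ℝ E]

/-- Once `z` is eliminated through `z = weightedAvg r (P ∘ w)`, the equation
`w' = (t / r) G (z, w)` with `w 0 = w₀` becomes the fixed-point equation
`w = picardOp r P G w₀ w`. -/
noncomputable def picardOp (r : ℝ) (P : E → E) (G : E × E → E) (w₀ : E) (g : ℝ → E) (t : ℝ) :
    E :=
  w₀ + ∫ s in (0 : ℝ)..t, (s / r) • G (weightedAvg r (P ∘ g) s, g s)

variable {r t : ℝ} {P : E → E} {G : E × E → E} {w₀ : E} {g g₁ g₂ : ℝ → E}

lemma picardOp_congr (ht : 0 ≤ t) (h : EqOn g₁ g₂ (Icc 0 t)) :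
    picardOp r P G w₀ g₁ t = picardOp r P G w₀ g₂ t := by
  unfold picardOp
  congr 1
  refine intervalIntegral.integral_congr fun s hs => ?_
  rw [uIcc_of_le ht] at hs
  rw [h hs, weightedAvg_congr (g₁ := P ∘ g₁) (g₂ := P ∘ g₂) hs.1 fun u hu =>
    congrArg P (h ⟨hu.1, hu.2.trans hs.2⟩)]

lemma norm_picardIntegrand_sub_le (hr : 0 < r) {KP KG : ℝ≥0} (hP : LipschitzWith KP P)
    (hG : LipschitzWith KG G) (hg₁ : ContinuousOn g₁ (Ici 0)) (hg₂ : ContinuousOn g₂ (Ici 0))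
    {T c : ℝ} {m : ℕ} (hc : 0 ≤ c) (hb : ∀ u ∈ Icc 0 T, ‖g₁ u - g₂ u‖ ≤ c * u ^ m) {s : ℝ}
    (hs : s ∈ Icc 0 T) :
    ‖(s / r) • G (weightedAvg r (P ∘ g₁) s, g₁ s) - (s / r) • G (weightedAvg r (P ∘ g₂) s, g₂ s)‖
      ≤ T * KG * (KP + 1) / r * c * s ^ m := by
  have hcs : 0 ≤ c * s ^ m := mul_nonneg hc (pow_nonneg hs.1 m)
  have havg : ‖weightedAvg r (P ∘ g₁) s - weightedAvg r (P ∘ g₂) s‖ ≤ KP * (c * s ^ m) := by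
    refine norm_weightedAvg_sub_le hr hs.1
      (hP.continuous.comp_continuousOn (hg₁.mono Icc_subset_Ici_self))
      (hP.continuous.comp_continuousOn (hg₂.mono Icc_subset_Ici_self)) fun u hu => ?_
    refine (hP.norm_sub_le _ _).trans (mul_le_mul_of_nonneg_left ?_ KP.2)
    refine (hb u ⟨hu.1, hu.2.trans hs.2⟩).trans (mul_le_mul_of_nonneg_left ?_ hc)
    exact pow_le_pow_left₀ hu.1 hu.2 m
  have hGdiff : ‖G (weightedAvg r (P ∘ g₁) s, g₁ s) - G (weightedAvg r (P ∘ g₂) s, g₂ s)‖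
      ≤ KG * ((KP + 1) * (c * s ^ m)) := by
    refine (hG.norm_sub_le _ _).trans (mul_le_mul_of_nonneg_left ?_ KG.2)
    rw [Prod.mk_sub_mk, Prod.norm_def]
    have := hb s hs
    exact max_le (by nlinarith) (by nlinarith)
  rw [← smul_sub, norm_smul, Real.norm_of_nonneg (div_nonneg hs.1 hr.le)]
  calc s / r * ‖G (weightedAvg r (P ∘ g₁) s, g₁ s) - G (weightedAvg r (P ∘ g₂) s, g₂ s)‖
      ≤ T / r * (KG * ((KP + 1) * (c * s ^ m))) :=
        mul_le_mul (div_le_div_of_nonneg_right hs.2 hr.le) hGdiff (norm_nonneg _)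
          (div_nonneg (hs.1.trans hs.2) hr.le)
    _ = T * KG * (KP + 1) / r * c * s ^ m := by ring

variable [CompleteSpace E]

lemma continuousOn_picardIntegrand (hr : 0 < r) (hP : Continuous P) (hG : Continuous G)
    (hg : ContinuousOn g (Ici 0)) :
    ContinuousOn (fun s => (s / r) • G (weightedAvg r (P ∘ g) s, g s)) (Ici 0) :=
  (continuousOn_id.div_const r).smul
    (hG.comp_continuousOn ((continuousOn_weightedAvg hr (hP.comp_continuousOn hg)).prodMk hg))

lemma continuousOn_picardOp (hr : 0 < r) (hP : Continuous P) (hG : Continuous G)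
    (hg : ContinuousOn g (Ici 0)) : ContinuousOn (picardOp r P G w₀ g) (Ici 0) := by
  refine continuousOn_Ici_of_forall_Icc fun T hT => continuousOn_const.add ?_
  have := intervalIntegral.continuousOn_primitive_interval' (μ := volume)
    (((continuousOn_picardIntegrand hr hP hG hg).mono Icc_subset_Ici_self).intervalIntegrable_of_Icc
      hT) left_mem_uIcc
  rwa [uIcc_of_le hT] at this

lemma hasDerivAt_picardOp (hr : 0 < r) (hP : Continuous P) (hG : Continuous G)
    (hg : ContinuousOn g (Ici 0)) (ht : 0 < t) :
    HasDerivAt (picardOp r P G w₀ g) ((t / r) • G (weightedAvg r (P ∘ g) t, g t)) t := by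
  have hI := continuousOn_picardIntegrand hr hP hG hg
  exact (hasDerivAt_integral_of_continuousOn_Ioi
    ((hI.mono Icc_subset_Ici_self).intervalIntegrable_of_Icc ht.le)
    (hI.mono Ioi_subset_Ici_self) ht).const_add w₀

lemma volterraLipschitzOnWith_picardOp (hr : 0 < r) {KP KG : ℝ≥0} (hP : LipschitzWith KP P)
    (hG : LipschitzWith KG G) (T : ℝ) :
    VolterraLipschitzOnWith (T * KG * (KP + 1) / r) T (picardOp r P G w₀) := by
  intro g₁ g₂ hg₁ hg₂ c m hc hb t ht
  have hI₁ := continuousOn_picardIntegrand hr hP.continuous hG.continuous hg₁.continuousOn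
  have hI₂ := continuousOn_picardIntegrand hr hP.continuous hG.continuous hg₂.continuousOn
  rw [picardOp, picardOp, add_sub_add_left_eq_sub, ← intervalIntegral.integral_sub
    ((hI₁.mono Icc_subset_Ici_self).intervalIntegrable_of_Icc ht.1)
    ((hI₂.mono Icc_subset_Ici_self).intervalIntegrable_of_Icc ht.1)]
  calc _ ≤ ∫ s in (0 : ℝ)..t, T * KG * (KP + 1) / r * c * s ^ m :=
        intervalIntegral.norm_integral_le_of_norm_le ht.1 (ae_of_all _ fun s hs =>
          norm_picardIntegrand_sub_le hr hP hG hg₁.continuousOn hg₂.continuousOn hc hb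
            ⟨hs.1.le, hs.2.trans ht.2⟩)
          (Continuous.intervalIntegrable (by fun_prop) _ _)
    _ = _ := by simp [intervalIntegral.integral_const_mul, integral_pow]; ring

lemma eqOn_picardOp_of_hasDerivAt (hr : 0 < r) (hP : Continuous P) (hG : Continuous G)
    {w : ℝ → E} (hw : ContinuousOn w (Ici 0)) (hw₀ : w 0 = w₀)
    (hderiv : ∀ t > 0, HasDerivAt w ((t / r) • G (weightedAvg r (P ∘ w) t, w t)) t) :
    EqOn w (picardOp r P G w₀ w) (Ici 0) := by
  intro t ht
  have hI := continuousOn_picardIntegrand hr hP hG hw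
  rw [picardOp, intervalIntegral.integral_eq_sub_of_hasDeriv_right_of_le ht
    (hw.mono Icc_subset_Ici_self) (fun s hs => (hderiv s hs.1).hasDerivWithinAt)
    ((hI.mono Icc_subset_Ici_self).intervalIntegrable_of_Icc ht), hw₀]
  abel

end picardOp

/-- The right-hand side of the `w`-equation once `z + (t / r) z'` is replaced by `Π*(w)`, which is
what the `z`-equation says it equals. -/
def pdField (Pistar Pimap Rg H : E → E) (p : E × E) : E :=
  -(Rg p.1) - H (Pistar p.2) + Pimap (Pistar p.2) - p.2

lemma lipschitzWith_pdField {Pistar Pimap Rg H : E → E} {K₁ K₂ K₃ K₄ : ℝ≥0}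
    (hPistar : LipschitzWith K₁ Pistar) (hPimap : LipschitzWith K₂ Pimap)
    (hRg : LipschitzWith K₃ Rg) (hH : LipschitzWith K₄ H) :
    ∃ L, LipschitzWith L (pdField Pistar Pimap Rg H) :=
  ⟨_, (((hRg.comp LipschitzWith.prod_fst).neg.sub
    ((hH.comp hPistar).comp LipschitzWith.prod_snd)).add
    ((hPimap.comp hPistar).comp LipschitzWith.prod_snd)).sub LipschitzWith.prod_snd⟩

lemma add_div_smul_div_smul_sub_cancel {V : Type*} [AddCommGroup V] [Module ℝ V] {r t : ℝ}
    (hr : r ≠ 0) (ht : t ≠ 0) (p z : V) :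
    z + (t / r) • ((r / t) • (p - z)) = p := by
  rw [smul_smul, div_mul_div_comm, mul_comm t r, div_self (mul_ne_zero hr ht), one_smul,
    add_sub_cancel]

section IsSingularPDSolution

variable {n : ℕ} {r : ℝ} {Pistar Pimap Rg : EuclideanSpace ℝ (Fin n) → EuclideanSpace ℝ (Fin n)}
  {Ht : Matrix (Fin n) (Fin n) ℝ} {z₀ w₀ : EuclideanSpace ℝ (Fin n)}

lemma isSingularPDSolution_of_eqOn_picardOp (hr : 0 < r) (hPistar : Continuous Pistar)
    (hG : Continuous (pdField Pistar Pimap Rg (Matrix.toEuclideanLin Ht)))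
    {w : ℝ → EuclideanSpace ℝ (Fin n)} (hw : ContinuousOn w (Ici 0))
    (hfix : EqOn (picardOp r Pistar (pdField Pistar Pimap Rg (Matrix.toEuclideanLin Ht)) w₀ w) w
      (Ici 0))
    (hz₀ : z₀ = Pistar w₀) :
    IsSingularPDSolution n r Pistar Pimap Rg Ht z₀ w₀ (weightedAvg r (Pistar ∘ w)) w
      (fun t => (r / t) • (Pistar (w t) - weightedAvg r (Pistar ∘ w) t))
      (fun t => (t / r) • pdField Pistar Pimap Rg (Matrix.toEuclideanLin Ht)
        (weightedAvg r (Pistar ∘ w) t, w t)) := by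
  have hw₀ : w 0 = w₀ := by simpa [picardOp] using (hfix (mem_Ici.2 le_rfl)).symm
  refine ⟨continuousOn_weightedAvg hr (hPistar.comp_continuousOn hw), hw,
    by rw [weightedAvg_zero, Function.comp_apply, hw₀, hz₀], hw₀, fun t ht =>
    ⟨hasDerivAt_weightedAvg hr (hPistar.comp_continuousOn hw) ht, ?_, rfl, ?_⟩⟩
  · refine (hasDerivAt_picardOp (w₀ := w₀) hr hPistar hG hw ht).congr_of_eventuallyEq ?_
    filter_upwards [Ici_mem_nhds ht] with u hu using (hfix hu).symm
  · rw [add_div_smul_div_smul_sub_cancel hr.ne' ht.ne']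
    rfl

lemma IsSingularPDSolution.eqOn_weightedAvg {z w zd wd : ℝ → EuclideanSpace ℝ (Fin n)}
    (h : IsSingularPDSolution n r Pistar Pimap Rg Ht z₀ w₀ z w zd wd) (hr : 0 < r)
    (hPistar : Continuous Pistar) (hz₀ : z₀ = Pistar w₀) :
    EqOn z (weightedAvg r (Pistar ∘ w)) (Ici 0) := by
  obtain ⟨hz, hw, hz0, hw0, hode⟩ := h
  refine eqOn_weightedAvg_of_hasDerivAt hr (hPistar.comp_continuousOn hw) hz
    (by rw [hz0, hz₀, Function.comp_apply, hw0]) fun t ht => ?_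
  obtain ⟨hzd, -, hzd_eq, -⟩ := hode t ht
  rwa [hzd_eq] at hzd

lemma IsSingularPDSolution.eqOn_picardOp {z w zd wd : ℝ → EuclideanSpace ℝ (Fin n)}
    (h : IsSingularPDSolution n r Pistar Pimap Rg Ht z₀ w₀ z w zd wd) (hr : 0 < r)
    (hPistar : Continuous Pistar)
    (hG : Continuous (pdField Pistar Pimap Rg (Matrix.toEuclideanLin Ht)))
    (hz₀ : z₀ = Pistar w₀) :
    EqOn w (picardOp r Pistar (pdField Pistar Pimap Rg (Matrix.toEuclideanLin Ht)) w₀ w)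
      (Ici 0) := by
  have hz := h.eqOn_weightedAvg hr hPistar hz₀
  obtain ⟨-, hw, -, hw0, hode⟩ := h
  refine eqOn_picardOp_of_hasDerivAt hr hPistar hG hw hw0 fun t ht => ?_
  obtain ⟨-, hwd, hzd_eq, hwd_eq⟩ := hode t ht
  rw [hzd_eq, add_div_smul_div_smul_sub_cancel hr.ne' ht.ne', hz ht.le] at hwd_eq
  rwa [hwd_eq] at hwd

end IsSingularPDSolution

theorem stmt_7_general (n : ℕ) (r : ℝ) (hr : 0 < r)
    (Pistar Pimap Rg : EuclideanSpace ℝ (Fin n) → EuclideanSpace ℝ (Fin n))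
    (K₁ K₂ K₃ : NNReal)
    (hPistar : LipschitzWith K₁ Pistar)
    (hPimap : LipschitzWith K₂ Pimap)
    (hRg : LipschitzWith K₃ Rg)
    (Ht : Matrix (Fin n) (Fin n) ℝ)
    (z₀ w₀ : EuclideanSpace ℝ (Fin n))
    (hz₀ : z₀ = Pistar w₀) :
    ∃ z w zd wd : ℝ → EuclideanSpace ℝ (Fin n),
      IsSingularPDSolution n r Pistar Pimap Rg Ht z₀ w₀ z w zd wd ∧
      ∀ z₂ w₂ zd₂ wd₂ : ℝ → EuclideanSpace ℝ (Fin n),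
        IsSingularPDSolution n r Pistar Pimap Rg Ht z₀ w₀ z₂ w₂ zd₂ wd₂ →
        ∀ t ≥ (0 : ℝ), z₂ t = z t ∧ w₂ t = w t := by
  obtain ⟨L, hG⟩ := lipschitzWith_pdField hPistar hPimap hRg
    (Matrix.toEuclideanLin Ht).toContinuousLinearMap.lipschitz
  obtain ⟨w, hw, hfix, huniq⟩ := exists_fixedPoint_of_causal
    (Φ := picardOp r Pistar (pdField Pistar Pimap Rg (Matrix.toEuclideanLin Ht)) w₀)
    (fun _ _ _ ht h => picardOp_congr ht h)
    (fun _ hg => continuousOn_picardOp hr hPistar.continuous hG.continuous hg.continuousOn)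
    fun T hT => ⟨_, by positivity, volterraLipschitzOnWith_picardOp hr hPistar hG T⟩
  refine ⟨_, w, _, _,
    isSingularPDSolution_of_eqOn_picardOp hr hPistar.continuous hG.continuous hw hfix hz₀, ?_⟩
  intro z₂ w₂ zd₂ wd₂ hsol t ht
  have hw₂ : EqOn w₂ w (Ici 0) :=
    huniq w₂ hsol.2.1 (hsol.eqOn_picardOp hr hPistar.continuous hG.continuous hz₀).symm
  refine ⟨?_, hw₂ ht⟩
  rw [hsol.eqOn_weightedAvg hr hPistar.continuous hz₀ ht]
  exact weightedAvg_congr ht fun s hs => congrArg Pistar (hw₂ hs.1)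

/-- Theorem 1 of the paper. For `r > 0`, globally Lipschitz maps
`Π*, Π, R′` and a matrix `H̃`, with compatible initial data `z₀ = Π*(w₀)`, `w₀ = Π(z₀)`,
the singular accelerated primal-dual ODE has a solution on `[0,∞)`, unique in the sense
that any two solutions coincide on `[0,∞)`. -/
theorem stmt_7 (n : ℕ) (r : ℝ) (hr : 0 < r)
    (Pistar Pimap Rg : EuclideanSpace ℝ (Fin n) → EuclideanSpace ℝ (Fin n))
    (K₁ K₂ K₃ : NNReal)
    (hPistar : LipschitzWith K₁ Pistar)
    (hPimap : LipschitzWith K₂ Pimap)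
    (hRg : LipschitzWith K₃ Rg)
    (Ht : Matrix (Fin n) (Fin n) ℝ)
    (z₀ w₀ : EuclideanSpace ℝ (Fin n))
    (hz₀ : z₀ = Pistar w₀) (hw₀ : w₀ = Pimap z₀) :
    ∃ z w zd wd : ℝ → EuclideanSpace ℝ (Fin n),
      IsSingularPDSolution n r Pistar Pimap Rg Ht z₀ w₀ z w zd wd ∧
      ∀ z₂ w₂ zd₂ wd₂ : ℝ → EuclideanSpace ℝ (Fin n),
        IsSingularPDSolution n r Pistar Pimap Rg Ht z₀ w₀ z₂ w₂ zd₂ wd₂ →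
        ∀ t ≥ (0 : ℝ), z₂ t = z t ∧ w₂ t = w t :=
  stmt_7_general n r hr Pistar Pimap Rg K₁ K₂ K₃ hPistar hPimap hRg Ht z₀ w₀ hz₀
end

section
/- Let n ∈ ℕ, r ≥ 1, K ≥ 0, T > 0, z₀ ∈ ℝ^n. Suppose z : [0,T] → ℝ^n is continuous on [0,T], differentiable on (0,T], z(0) = z₀, and there is g : (0,T] → ℝ^n with ‖g(t) − z₀‖ ≤ K t²/2 for all t ∈ (0,T] such that z′(t) = (r/t)(g(t) − z(t)) for all t ∈ (0,T]. Then for every t ∈ [0,T]: ‖z(t) − z₀‖ ≤ r K t²/(2(r+2)) ≤ r K t²/6, and moreover ‖z′(t)‖ ≤ r K t (1/2 + r/(2(r+2))) for t ∈ (0,T]. -/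
/-!
Multiplying by the integrating factor `t ^ r` turns the equation into
`d/dt [t ^ r • (z t - z₀)] = (r * t ^ (r - 1)) • (g t - z₀)`, whose norm is at most
`r * K * t ^ (r + 1) / 2`. Since `t ^ r • (z t - z₀)` vanishes at `0`, the mean value inequality
bounds it by `r * K * t ^ (r + 2) / (2 * (r + 2))`; dividing by `t ^ r` gives the bound on `z`.
The bound on `z'` then follows from the equation and the triangle inequality.
-/

open Set

/- Unlike `image_norm_le_of_norm_deriv_right_le_deriv_boundary`, this needs differentiability
only on the open interval: composing with a norming functional reduces it to a real
monotonicity argument. -/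
theorem norm_sub_le_sub_of_norm_hasDerivAt_le {E : Type*} [NormedAddCommGroup E]
    [NormedSpace ℝ E] {F F' : ℝ → E} {B B' : ℝ → ℝ} {a b : ℝ} (hab : a ≤ b)
    (hF : ContinuousOn F (Icc a b)) (hB : ContinuousOn B (Icc a b))
    (hF' : ∀ x ∈ Ioo a b, HasDerivAt F (F' x) x)
    (hB' : ∀ x ∈ Ioo a b, HasDerivAt B (B' x) x)
    (bound : ∀ x ∈ Ioo a b, ‖F' x‖ ≤ B' x) :
    ‖F b - F a‖ ≤ B b - B a := by
  obtain ⟨φ, hφ_norm, hφ⟩ := exists_dual_vector'' ℝ (F b - F a)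
  have hanti : AntitoneOn (fun x => φ (F x) - B x) (Icc a b) := by
    refine antitoneOn_of_hasDerivWithinAt_nonpos (convex_Icc a b)
      ((φ.continuous.comp_continuousOn hF).sub hB) (f' := fun x => φ (F' x) - B' x) ?_ ?_
    all_goals rw [interior_Icc]
    · intro x hx
      exact ((φ.hasFDerivAt.comp_hasDerivAt x (hF' x hx)).sub (hB' x hx)).hasDerivWithinAt
    · intro x hx
      have hφF' : φ (F' x) ≤ ‖F' x‖ :=
        (le_abs_self _).trans <| (φ.le_opNorm (F' x)).trans
          (mul_le_of_le_one_left (norm_nonneg _) hφ_norm)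
      linarith [bound x hx]
  have := hanti (left_mem_Icc.2 hab) (right_mem_Icc.2 hab) hab
  have hφ' : φ (F b) - φ (F a) = ‖F b - F a‖ := by simpa using hφ
  linarith

theorem hasDerivAt_rpow_smul_sub_of_singular_averaging {E : Type*} [NormedAddCommGroup E]
    [NormedSpace ℝ E] {z : ℝ → E} {z' g : E} (z₀ : E) {r s : ℝ} (hs : 0 < s)
    (hz : HasDerivAt z z' s) (hode : z' = (r / s) • (g - z s)) :
    HasDerivAt (fun x => x ^ r • (z x - z₀)) ((r * s ^ (r - 1)) • (g - z₀)) s := by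
  refine ((Real.hasDerivAt_rpow_const (p := r) (Or.inl hs.ne')).smul
    (hz.sub_const z₀)).congr_deriv ?_
  rw [hode, smul_smul, Real.rpow_sub_one hs.ne', mul_div_left_comm, ← smul_add]
  congr 1
  abel

theorem norm_sub_le_of_singular_averaging {E : Type*} [NormedAddCommGroup E] [NormedSpace ℝ E]
    {r K T t : ℝ} (hr : 0 < r) {z g zd : ℝ → E} {z₀ : E}
    (hzc : ContinuousOn z (Icc 0 T)) (hz0 : z 0 = z₀)
    (hzD : ∀ s ∈ Ioc (0 : ℝ) T, HasDerivAt z (zd s) s)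
    (hg : ∀ s ∈ Ioc (0 : ℝ) T, ‖g s - z₀‖ ≤ K * s ^ 2 / 2)
    (hode : ∀ s ∈ Ioc (0 : ℝ) T, zd s = (r / s) • (g s - z s)) (ht : t ∈ Icc 0 T) :
    ‖z t - z₀‖ ≤ r * K * t ^ 2 / (2 * (r + 2)) := by
  obtain ⟨ht0, htT⟩ := ht
  rcases ht0.eq_or_lt with rfl | ht0
  · simp [hz0]
  have hIoo : ∀ s ∈ Ioo 0 t, s ∈ Ioc 0 T := fun s hs => ⟨hs.1, hs.2.le.trans htT⟩
  have hF : ContinuousOn (fun x => x ^ r • (z x - z₀)) (Icc 0 t) :=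
    (continuousOn_id.rpow_const fun _ _ => Or.inr hr.le).smul
      ((hzc.mono (Icc_subset_Icc_right htT)).sub continuousOn_const)
  have hB : ContinuousOn (fun x => r * K / (2 * (r + 2)) * x ^ (r + 2)) (Icc 0 t) :=
    continuousOn_const.mul (continuousOn_id.rpow_const fun _ _ => Or.inr (by linarith))
  have hB' : ∀ s ∈ Ioo (0 : ℝ) t,
      HasDerivAt (fun x => r * K / (2 * (r + 2)) * x ^ (r + 2)) (r * K / 2 * s ^ (r + 1)) s := by
    intro s hs
    refine ((Real.hasDerivAt_rpow_const (p := r + 2) (Or.inl hs.1.ne')).const_mul _).congr_deriv ?_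
    rw [show r + 2 - 1 = r + 1 by ring]
    field_simp
  have hbound : ∀ s ∈ Ioo (0 : ℝ) t,
      ‖(r * s ^ (r - 1)) • (g s - z₀)‖ ≤ r * K / 2 * s ^ (r + 1) := by
    intro s hs
    have hs0 := hs.1
    rw [norm_smul, Real.norm_of_nonneg (by positivity)]
    calc r * s ^ (r - 1) * ‖g s - z₀‖ ≤ r * s ^ (r - 1) * (K * s ^ 2 / 2) :=
          mul_le_mul_of_nonneg_left (hg s (hIoo s hs)) (by positivity)
      _ = r * K / 2 * s ^ (r + 1) := by
          rw [Real.rpow_sub_one hs0.ne', Real.rpow_add_one hs0.ne']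
          field_simp
  have key := norm_sub_le_sub_of_norm_hasDerivAt_le ht0.le hF hB
    (fun s hs => hasDerivAt_rpow_smul_sub_of_singular_averaging z₀ hs.1 (hzD s (hIoo s hs))
      (hode s (hIoo s hs))) hB' hbound
  have htr : 0 < t ^ r := Real.rpow_pos_of_pos ht0 r
  rw [hz0, sub_self, smul_zero, sub_zero, Real.zero_rpow (by linarith), mul_zero, sub_zero,
    norm_smul, Real.norm_of_nonneg htr.le, Real.rpow_add ht0, Real.rpow_two] at key
  refine le_of_mul_le_mul_left ?_ htr
  calc t ^ r * ‖z t - z₀‖ ≤ r * K / (2 * (r + 2)) * (t ^ r * t ^ 2) := key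
    _ = t ^ r * (r * K * t ^ 2 / (2 * (r + 2))) := by ring

theorem stmt_9_general (n : ℕ) (r K T : ℝ) (hr : 1 ≤ r) (hK : 0 ≤ K)
    (z₀ : EuclideanSpace ℝ (Fin n))
    (z g : ℝ → EuclideanSpace ℝ (Fin n))
    (zd : ℝ → EuclideanSpace ℝ (Fin n))
    (hzc : ContinuousOn z (Icc 0 T))
    (hz0 : z 0 = z₀)
    (hzD : ∀ t ∈ Ioc (0 : ℝ) T, HasDerivAt z (zd t) t)
    (hg : ∀ t ∈ Ioc (0 : ℝ) T, ‖g t - z₀‖ ≤ K * t ^ 2 / 2)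
    (hode : ∀ t ∈ Ioc (0 : ℝ) T, zd t = (r / t) • (g t - z t)) :
    (∀ t ∈ Icc (0 : ℝ) T,
      ‖z t - z₀‖ ≤ r * K * t ^ 2 / (2 * (r + 2)) ∧
      r * K * t ^ 2 / (2 * (r + 2)) ≤ r * K * t ^ 2 / 6) ∧
    (∀ t ∈ Ioc (0 : ℝ) T, ‖zd t‖ ≤ r * K * t * (1 / 2 + r / (2 * (r + 2)))) := by
  have hr0 : 0 < r := by linarith
  have hz : ∀ t ∈ Icc 0 T, ‖z t - z₀‖ ≤ r * K * t ^ 2 / (2 * (r + 2)) :=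
    fun t ht => norm_sub_le_of_singular_averaging hr0 hzc hz0 hzD hg hode ht
  refine ⟨fun t ht => ⟨hz t ht, ?_⟩, fun t ht => ?_⟩
  · exact div_le_div_of_nonneg_left (by positivity) (by norm_num) (by linarith)
  have ht0 := ht.1
  have hgz : ‖g t - z t‖ ≤ K * t ^ 2 / 2 + r * K * t ^ 2 / (2 * (r + 2)) :=
    calc ‖g t - z t‖ = ‖(g t - z₀) - (z t - z₀)‖ := by rw [sub_sub_sub_cancel_right]
      _ ≤ ‖g t - z₀‖ + ‖z t - z₀‖ := norm_sub_le _ _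
      _ ≤ _ := add_le_add (hg t ht) (hz t (Ioc_subset_Icc_self ht))
  rw [hode t ht, norm_smul, Real.norm_of_nonneg (by positivity)]
  calc r / t * ‖g t - z t‖ ≤ r / t * (K * t ^ 2 / 2 + r * K * t ^ 2 / (2 * (r + 2))) := by
        gcongr
    _ = r * K * t * (1 / 2 + r / (2 * (r + 2))) := by
        field_simp

/-- Growth estimate for the singular averaging ODE
`z′(t) = (r/t)(g(t) − z(t))`: if `r ≥ 1`, `z` is continuous on `[0,T]` and differentiable
on `(0,T]` with `z(0) = z₀`, and `‖g(t) − z₀‖ ≤ K t²/2` on `(0,T]`, then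
`‖z(t) − z₀‖ ≤ r K t²/(2(r+2)) ≤ r K t²/6` on `[0,T]` and
`‖z′(t)‖ ≤ r K t (1/2 + r/(2(r+2)))` on `(0,T]`. -/
theorem stmt_9 (n : ℕ) (r K T : ℝ) (hr : 1 ≤ r) (hK : 0 ≤ K) (hT : 0 < T)
    (z₀ : EuclideanSpace ℝ (Fin n))
    (z g : ℝ → EuclideanSpace ℝ (Fin n))
    (zd : ℝ → EuclideanSpace ℝ (Fin n))
    (hzc : ContinuousOn z (Icc 0 T))
    (hz0 : z 0 = z₀)
    (hzD : ∀ t ∈ Ioc (0 : ℝ) T, HasDerivAt z (zd t) t)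
    (hg : ∀ t ∈ Ioc (0 : ℝ) T, ‖g t - z₀‖ ≤ K * t ^ 2 / 2)
    (hode : ∀ t ∈ Ioc (0 : ℝ) T, zd t = (r / t) • (g t - z t)) :
    (∀ t ∈ Icc (0 : ℝ) T,
      ‖z t - z₀‖ ≤ r * K * t ^ 2 / (2 * (r + 2)) ∧
      r * K * t ^ 2 / (2 * (r + 2)) ≤ r * K * t ^ 2 / 6) ∧
    (∀ t ∈ Ioc (0 : ℝ) T, ‖zd t‖ ≤ r * K * t * (1 / 2 + r / (2 * (r + 2)))) :=
  stmt_9_general n r K T hr hK z₀ z g zd hzc hz0 hzD hg hode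
end

section
/- Let Ω ⊆ ℝ^N be a convex set, f : ℝ^N → ℝ, L ∈ ℝ^{N×N} a symmetric positive semidefinite matrix with ⟨v, L v⟩ ≤ λ ‖v‖² for all v ∈ ℝ^N, and define S₁(x,y) = f(x) + ⟨y, L x⟩ + (1/2)⟨x, L x⟩. Suppose x* ∈ Ω and y* ∈ ℝ^N satisfy L x* = 0 and f(x*) ≤ f(x) + ⟨y*, L x⟩ for all x ∈ Ω. Let C ≥ 0 and let x : (0,∞) → Ω, y : (0,∞) → ℝ^N satisfy S₁(x(t), y*) − S₁(x*, y(t)) ≤ C/t² for all t > 0. Then for every t > 0: ‖L x(t)‖ ≤ √(2 λ C) / t and |f(x(t)) − f(x*)| ≤ ‖y*‖ √(2 λ C)/t + C/t²; in particular both the constraint violation ‖L x(t)‖ and the suboptimality |f(x(t)) − f(x*)| converge to 0 at rate O(1/t). -/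
/-!
The gap `S₁(x, y*) − S₁(x*, y)` equals `[f(x) − f(x*) + ⟨y*, L x⟩] + ½⟨x, L x⟩`, and the
bracket is nonnegative by Lagrangian optimality, so a gap `≤ ε` forces `⟨x, L x⟩ ≤ 2ε`.
Cauchy–Schwarz for the semidefinite form `(u, v) ↦ ⟨u, L v⟩`, applied to `x` and `L x`, gives
`‖L x‖² ≤ λ⟨x, L x⟩ ≤ 2λε`; the bound on `f(x) − f(x*)` then follows from
`|⟨y*, L x⟩| ≤ ‖y*‖ ‖L x‖`. With `ε = C/t²` both rates are `O(1/t)`.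
-/

open scoped RealInnerProductSpace

section AugmentedLagrangian

variable {E : Type*} [NormedAddCommGroup E] [InnerProductSpace ℝ E] {T : E →ₗ[ℝ] E}

noncomputable def augmentedLagrangian (f : E → ℝ) (T : E →ₗ[ℝ] E) (x y : E) : ℝ :=
  f x + ⟪y, T x⟫ + 1 / 2 * ⟪x, T x⟫

theorem LinearMap.IsPositive.norm_apply_sq_le (hT : T.IsPositive) {lam : ℝ} (hlam : 0 ≤ lam)
    (hbound : ∀ v, ⟪v, T v⟫ ≤ lam * ‖v‖ ^ 2) (v : E) :
    ‖T v‖ ^ 2 ≤ lam * ⟪v, T v⟫ := by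
  have hnonneg : ∀ u, 0 ≤ ⟪u, T u⟫ := fun u => real_inner_comm (T u) u ▸ hT.inner_nonneg_left u
  have hCS : ⟪v, T (T v)⟫ * ⟪T v, T v⟫ ≤ ⟪v, T v⟫ * ⟪T v, T (T v)⟫ :=
    LinearMap.BilinForm.apply_mul_apply_le_of_forall_zero_le ((innerₗ E).compl₂ T) hnonneg v (T v)
  rw [← hT.isSymmetric v (T v), real_inner_self_eq_norm_sq] at hCS
  rcases (sq_nonneg ‖T v‖).eq_or_lt with hzero | hpos
  · rw [← hzero]
    exact mul_nonneg hlam (hnonneg v)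
  · refine le_of_mul_le_mul_right ?_ hpos
    calc ‖T v‖ ^ 2 * ‖T v‖ ^ 2 ≤ ⟪v, T v⟫ * ⟪T v, T (T v)⟫ := hCS
      _ ≤ ⟪v, T v⟫ * (lam * ‖T v‖ ^ 2) := mul_le_mul_of_nonneg_left (hbound _) (hnonneg v)
      _ = lam * ⟪v, T v⟫ * ‖T v‖ ^ 2 := by ring

theorem norm_apply_le_and_abs_sub_le_of_augmentedLagrangian_gap_le (hT : T.IsPositive)
    {lam : ℝ} (hlam : 0 ≤ lam) (hbound : ∀ v, ⟪v, T v⟫ ≤ lam * ‖v‖ ^ 2)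
    {f : E → ℝ} {Ω : Set E} {xstar ystar : E} (hTx : T xstar = 0)
    (hopt : ∀ x ∈ Ω, f xstar ≤ f x + ⟪ystar, T x⟫) {x y : E} (hx : x ∈ Ω) {ε : ℝ}
    (hgap : augmentedLagrangian f T x ystar - augmentedLagrangian f T xstar y ≤ ε) :
    ‖T x‖ ≤ Real.sqrt (2 * lam * ε) ∧ |f x - f xstar| ≤ ‖ystar‖ * Real.sqrt (2 * lam * ε) + ε := by
  simp only [augmentedLagrangian, hTx, inner_zero_right, mul_zero, add_zero] at hgap
  have hopt_x := hopt x hx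
  have hquad : 0 ≤ ⟪x, T x⟫ := real_inner_comm (T x) x ▸ hT.inner_nonneg_left x
  have hquad_le : ⟪x, T x⟫ ≤ 2 * ε := by linarith
  have hviolation : ‖T x‖ ≤ Real.sqrt (2 * lam * ε) :=
    Real.le_sqrt_of_sq_le <| (hT.norm_apply_sq_le hlam hbound x).trans <|
      (mul_le_mul_of_nonneg_left hquad_le hlam).trans_eq (by ring)
  have hdual : |⟪ystar, T x⟫| ≤ ‖ystar‖ * Real.sqrt (2 * lam * ε) :=
    (abs_real_inner_le_norm ystar (T x)).trans (by gcongr)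
  refine ⟨hviolation, abs_le.mpr ⟨?_, ?_⟩⟩ <;> linarith [abs_le.mp hdual]

end AugmentedLagrangian

theorem stmt_13_general (N : ℕ) (Ω : Set (EuclideanSpace ℝ (Fin N)))
    (f : EuclideanSpace ℝ (Fin N) → ℝ)
    (L : Matrix (Fin N) (Fin N) ℝ)
    (hsym : L.transpose = L)
    (hpsd : ∀ v : EuclideanSpace ℝ (Fin N), 0 ≤ ⟪v, Matrix.toEuclideanLin L v⟫)
    (lam : ℝ) (hlam : 0 ≤ lam)
    (hbound : ∀ v : EuclideanSpace ℝ (Fin N),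
      ⟪v, Matrix.toEuclideanLin L v⟫ ≤ lam * ‖v‖ ^ 2)
    (S₁ : EuclideanSpace ℝ (Fin N) → EuclideanSpace ℝ (Fin N) → ℝ)
    (hS₁ : ∀ x y, S₁ x y = f x + ⟪y, Matrix.toEuclideanLin L x⟫
      + (1 / 2) * ⟪x, Matrix.toEuclideanLin L x⟫)
    (xstar ystar : EuclideanSpace ℝ (Fin N))
    (hLx : Matrix.toEuclideanLin L xstar = 0)
    (hopt : ∀ x ∈ Ω, f xstar ≤ f x + ⟪ystar, Matrix.toEuclideanLin L x⟫)
    (C : ℝ)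
    (x : ℝ → EuclideanSpace ℝ (Fin N)) (y : ℝ → EuclideanSpace ℝ (Fin N))
    (hxΩ : ∀ t > 0, x t ∈ Ω)
    (hgap : ∀ t > 0, S₁ (x t) ystar - S₁ xstar (y t) ≤ C / t ^ 2) :
    ∀ t > 0,
      ‖Matrix.toEuclideanLin L (x t)‖ ≤ Real.sqrt (2 * lam * C) / t ∧
      |f (x t) - f xstar| ≤ ‖ystar‖ * Real.sqrt (2 * lam * C) / t + C / t ^ 2 := by
  intro t ht
  have hS : S₁ = augmentedLagrangian f (Matrix.toEuclideanLin L) := funext₂ hS₁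
  have hL : (Matrix.toEuclideanLin L).IsPositive :=
    (LinearMap.isPositive_iff _).mpr ⟨Matrix.isSymmetric_toEuclideanLin_iff.mpr
      (Matrix.isHermitian_iff_isSymm.mpr hsym), fun v => real_inner_comm v _ ▸ hpsd v⟩
  have hrate : Real.sqrt (2 * lam * (C / t ^ 2)) = Real.sqrt (2 * lam * C) / t := by
    rw [← mul_div_assoc, Real.sqrt_div' _ (by positivity), Real.sqrt_sq ht.le]
  rw [hS] at hgap
  have hbounds := norm_apply_le_and_abs_sub_le_of_augmentedLagrangian_gap_le hL hlam hbound hLx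
    hopt (hxΩ t ht) (hgap t ht)
  rwa [hrate, ← mul_div_assoc] at hbounds

/-- Corollary 1(iii) of the paper. If the duality gap along a
trajectory decays like `C/t²`, then the constraint violation `‖L x(t)‖` and the
suboptimality `|f(x(t)) − f(x*)|` decay at rate `O(1/t)`:
`‖L x(t)‖ ≤ √(2λC)/t` and `|f(x(t)) − f(x*)| ≤ ‖y*‖√(2λC)/t + C/t²`. -/
theorem stmt_13 (N : ℕ) (Ω : Set (EuclideanSpace ℝ (Fin N)))
    (hΩ : Convex ℝ Ω)
    (f : EuclideanSpace ℝ (Fin N) → ℝ)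
    (L : Matrix (Fin N) (Fin N) ℝ)
    (hsym : L.transpose = L)
    (hpsd : ∀ v : EuclideanSpace ℝ (Fin N), 0 ≤ ⟪v, Matrix.toEuclideanLin L v⟫)
    (lam : ℝ) (hlam : 0 ≤ lam)
    (hbound : ∀ v : EuclideanSpace ℝ (Fin N),
      ⟪v, Matrix.toEuclideanLin L v⟫ ≤ lam * ‖v‖ ^ 2)
    (S₁ : EuclideanSpace ℝ (Fin N) → EuclideanSpace ℝ (Fin N) → ℝ)
    (hS₁ : ∀ x y, S₁ x y = f x + ⟪y, Matrix.toEuclideanLin L x⟫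
      + (1 / 2) * ⟪x, Matrix.toEuclideanLin L x⟫)
    (xstar ystar : EuclideanSpace ℝ (Fin N))
    (hx : xstar ∈ Ω)
    (hLx : Matrix.toEuclideanLin L xstar = 0)
    (hopt : ∀ x ∈ Ω, f xstar ≤ f x + ⟪ystar, Matrix.toEuclideanLin L x⟫)
    (C : ℝ) (hC : 0 ≤ C)
    (x : ℝ → EuclideanSpace ℝ (Fin N)) (y : ℝ → EuclideanSpace ℝ (Fin N))
    (hxΩ : ∀ t > 0, x t ∈ Ω)
    (hgap : ∀ t > 0, S₁ (x t) ystar - S₁ xstar (y t) ≤ C / t ^ 2) :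
    ∀ t > 0,
      ‖Matrix.toEuclideanLin L (x t)‖ ≤ Real.sqrt (2 * lam * C) / t ∧
      |f (x t) - f xstar| ≤ ‖ystar‖ * Real.sqrt (2 * lam * C) / t + C / t ^ 2 :=
  stmt_13_general N Ω f L hsym hpsd lam hlam hbound S₁ hS₁ xstar ystar hLx hopt C x y hxΩ hgap
end

section
/- Let X ⊆ ℝ^p and Y ⊆ ℝ^q be convex sets, let F be strictly convex on X and G strictly convex on Y, H ∈ ℝ^{p×q}, and let (x*, y*) ∈ X × Y be a saddle point of L over X × Y, where L(x,y) = F(x) + ⟨x, H y⟩ − G(y). Then for every (x, y) ∈ X × Y the duality gap satisfies L(x, y*) − L(x*, y) ≥ 0, and L(x, y*) − L(x*, y) = 0 implies x = x* and y = y*. -/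
open scoped RealInnerProductSpace

/-- If `(x*, y*)` is a saddle point of the bilinear saddle function
`L(x,y) = F(x) + ⟪x, H y⟫ − G(y)` over `X × Y` with `F` strictly convex on `X` and `G`
strictly convex on `Y`, then the duality gap `L(x, y*) − L(x*, y)` is nonnegative on
`X × Y` and vanishes only at `(x*, y*)`. -/
theorem stmt_17 (p q : ℕ)
    (X : Set (EuclideanSpace ℝ (Fin p))) (Y : Set (EuclideanSpace ℝ (Fin q)))
    (hX : Convex ℝ X) (hY : Convex ℝ Y)
    (F : EuclideanSpace ℝ (Fin p) → ℝ) (G : EuclideanSpace ℝ (Fin q) → ℝ)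
    (hF : StrictConvexOn ℝ X F) (hG : StrictConvexOn ℝ Y G)
    (H : Matrix (Fin p) (Fin q) ℝ)
    (L : EuclideanSpace ℝ (Fin p) → EuclideanSpace ℝ (Fin q) → ℝ)
    (hL : ∀ x y, L x y = F x + ⟪x, Matrix.toEuclideanLin H y⟫ - G y)
    (xstar : EuclideanSpace ℝ (Fin p)) (ystar : EuclideanSpace ℝ (Fin q))
    (hxstar : xstar ∈ X) (hystar : ystar ∈ Y)
    (hsaddle : ∀ x ∈ X, ∀ y ∈ Y, L xstar y ≤ L xstar ystar ∧ L xstar ystar ≤ L x ystar) :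
    ∀ x ∈ X, ∀ y ∈ Y,
      0 ≤ L x ystar - L xstar y ∧
      (L x ystar - L xstar y = 0 → x = xstar ∧ y = ystar) := by
  intro x hx y hy
  obtain ⟨h1, h2⟩ := hsaddle x hx y hy
  constructor
  · linarith
  · intro hgap
    have hx2 : L x ystar = L xstar ystar := by linarith
    have hy2 : L xstar y = L xstar ystar := by linarith
    constructor
    · by_contra hne
      set m : EuclideanSpace ℝ (Fin p) := (1/2 : ℝ) • x + (1/2 : ℝ) • xstar with hm
      have hmX : m ∈ X := hX hx hxstar (by norm_num) (by norm_num) (by norm_num)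
      have hFm : F m < (1/2 : ℝ) * F x + (1/2 : ℝ) * F xstar :=
        hF.2 hx hxstar hne (by norm_num) (by norm_num) (by norm_num)
      have hinner : ⟪m, Matrix.toEuclideanLin H ystar⟫
          = (1/2 : ℝ) * ⟪x, Matrix.toEuclideanLin H ystar⟫
            + (1/2 : ℝ) * ⟪xstar, Matrix.toEuclideanLin H ystar⟫ := by
        rw [hm, inner_add_left, real_inner_smul_left, real_inner_smul_left]
      have hLm : L m ystar < L xstar ystar := by
        have := hsaddle m hmX y hy
        rw [hL m ystar, hL xstar ystar, hinner]
        rw [hL x ystar, hL xstar ystar] at hx2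
        linarith
      exact absurd hLm (not_lt.2 (hsaddle m hmX y hy).2)
    · by_contra hne
      set m : EuclideanSpace ℝ (Fin q) := (1/2 : ℝ) • y + (1/2 : ℝ) • ystar with hm
      have hmY : m ∈ Y := hY hy hystar (by norm_num) (by norm_num) (by norm_num)
      have hGm : G m < (1/2 : ℝ) * G y + (1/2 : ℝ) * G ystar :=
        hG.2 hy hystar hne (by norm_num) (by norm_num) (by norm_num)
      have hinner : ⟪xstar, Matrix.toEuclideanLin H m⟫
          = (1/2 : ℝ) * ⟪xstar, Matrix.toEuclideanLin H y⟫
            + (1/2 : ℝ) * ⟪xstar, Matrix.toEuclideanLin H ystar⟫ := by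
        rw [hm, map_add, map_smul, map_smul, inner_add_right, real_inner_smul_right,
          real_inner_smul_right]
      have hLm : L xstar ystar < L xstar m := by
        rw [hL xstar ystar, hL xstar m, hinner]
        rw [hL xstar y, hL xstar ystar] at hy2
        linarith
      exact absurd hLm (not_lt.2 (hsaddle x hx m hmY).1)
end
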